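/- Let 0 ≤ b < a ≤ 1 and let a = t₀ > t₁ > ⋯ > t_n = b (n ≥ 1) be a strictly decreasing sequence in [b, a]. Set ℓ_i = dist(P(t_{i−1}), P(t_i)), ℓ⁰ = dist(P(a), P(b)) and h⁰ = √(1 − (ℓ⁰/2)²). Then Σ_{i=1}^n ℓ_i ≤ ℓ⁰ / (h⁰)². In particular, the polygonal length of any partition of the arc from P(a) to P(b) is bounded above by dist(P(a),P(b)) / (1 − (dist(P(a),P(b))/2)²). -/

import Mathlib

/-- The point of the quarter of the unit circle in the closed first quadrant
with ordinate `y`. -/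
noncomputable def P (y : ℝ) : EuclideanSpace ℝ (Fin 2) := WithLp.toLp 2 ![Real.sqrt (1 - y ^ 2), y]

/-- `t 0 = a > t 1 > ⋯ > t n = b` is a strictly decreasing finite sequence (a partition
of the arc of the quarter circle from `P a` to `P b`). -/
def IsPartition (a b : ℝ) (n : ℕ) (t : ℕ → ℝ) : Prop :=
  0 < n ∧ t 0 = a ∧ t n = b ∧ ∀ i < n, t (i + 1) < t i

/-! Parametrize the arc by the angle `arcsin y`. A chord subtending the angle `δ` has length
`2 sin (δ / 2) ≤ δ`, so the polygonal length is at most the angle `2x = arcsin a - arcsin b` of the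
whole arc, while `ℓ⁰ = 2 sin x` and `h⁰ = cos x`; it remains to note `x ≤ tan x ≤ sin x / cos² x`
for `0 ≤ x < π / 2`. -/

open Real Set

lemma dist_toLp_cos_sin (θ φ : ℝ) :
    dist (WithLp.toLp 2 ![cos θ, sin θ] : EuclideanSpace ℝ (Fin 2)) (WithLp.toLp 2 ![cos φ, sin φ])
      = 2 * |sin ((θ - φ) / 2)| := by
  have hsq : (cos θ - cos φ) ^ 2 + (sin θ - sin φ) ^ 2 = (2 * |sin ((θ - φ) / 2)|) ^ 2 := by
    rw [cos_sub_cos, sin_sub_sin, mul_pow 2 |sin ((θ - φ) / 2)|, sq_abs]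
    linear_combination (4 * sin ((θ - φ) / 2) ^ 2) * sin_sq_add_cos_sq ((θ + φ) / 2)
  rw [EuclideanSpace.dist_eq, Fin.sum_univ_two]
  simp only [Matrix.cons_val_zero, Matrix.cons_val_one, Real.dist_eq, sq_abs]
  rw [hsq, sqrt_sq (by positivity)]

lemma P_eq_toLp_cos_sin_arcsin {y : ℝ} (hy₁ : -1 ≤ y) (hy₂ : y ≤ 1) :
    P y = WithLp.toLp 2 ![cos (arcsin y), sin (arcsin y)] := by
  rw [P, cos_arcsin, sin_arcsin hy₁ hy₂]

lemma dist_P_eq {y z : ℝ} (hy : y ∈ Icc (-1) 1) (hz : z ∈ Icc (-1) 1) :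
    dist (P y) (P z) = 2 * |sin ((arcsin y - arcsin z) / 2)| := by
  rw [P_eq_toLp_cos_sin_arcsin hy.1 hy.2, P_eq_toLp_cos_sin_arcsin hz.1 hz.2, dist_toLp_cos_sin]

lemma dist_P_le_abs_arcsin_sub {y z : ℝ} (hy : y ∈ Icc (-1) 1) (hz : z ∈ Icc (-1) 1) :
    dist (P y) (P z) ≤ |arcsin y - arcsin z| := by
  rw [dist_P_eq hy hz]
  linarith [abs_sin_le_abs (x := (arcsin y - arcsin z) / 2),
    abs_div (arcsin y - arcsin z) 2, (abs_two : |(2 : ℝ)| = 2)]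

lemma le_sin_div_cos_sq {x : ℝ} (hx₀ : 0 ≤ x) (hx : x < π / 2) : x ≤ sin x / cos x ^ 2 := by
  have hcos : 0 < cos x := cos_pos_of_mem_Ioo ⟨by linarith [pi_pos], hx⟩
  have hx_cos : x * cos x ≤ sin x := by
    have := le_tan hx₀ hx
    rwa [tan_eq_sin_div_cos, le_div_iff₀ hcos] at this
  rw [le_div_iff₀ (by positivity)]
  nlinarith [cos_le_one x, mul_nonneg hx₀ hcos.le]

namespace IsPartition

variable {a b : ℝ} {n : ℕ} {t : ℕ → ℝ}

lemma strictAntiOn (h : IsPartition a b n t) : StrictAntiOn t (Iic n) :=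
  strictAntiOn_Iic_of_succ_lt h.2.2.2

lemma mem_Icc (h : IsPartition a b n t) {i : ℕ} (hi : i ≤ n) : t i ∈ Icc b a := by
  have hanti := h.strictAntiOn.antitoneOn
  obtain ⟨-, ht₀, htₙ, -⟩ := h
  exact ⟨htₙ ▸ hanti hi self_mem_Iic hi, ht₀ ▸ hanti n.zero_le hi i.zero_le⟩

lemma lt (h : IsPartition a b n t) : b < a := by
  have := h.strictAntiOn n.zero_le self_mem_Iic h.1
  rwa [h.2.1, h.2.2.1] at this

lemma sum_dist_P_le (h : IsPartition a b n t) (hb : -1 ≤ b) (ha : a ≤ 1) :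
    ∑ i ∈ Finset.range n, dist (P (t i)) (P (t (i + 1))) ≤ arcsin a - arcsin b := by
  have hIcc {i : ℕ} (hi : i ≤ n) : t i ∈ Icc (-1) 1 :=
    ⟨hb.trans (h.mem_Icc hi).1, (h.mem_Icc hi).2.trans ha⟩
  calc ∑ i ∈ Finset.range n, dist (P (t i)) (P (t (i + 1)))
      ≤ ∑ i ∈ Finset.range n, (arcsin (t i) - arcsin (t (i + 1))) := by
        refine Finset.sum_le_sum fun i hi ↦ ?_
        have hi := Finset.mem_range.1 hi
        have hstep := monotone_arcsin (h.2.2.2 i hi).le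
        exact (dist_P_le_abs_arcsin_sub (hIcc hi.le) (hIcc hi)).trans_eq
          (abs_of_nonneg (sub_nonneg.2 hstep))
    _ = arcsin a - arcsin b := by rw [Finset.sum_range_sub', h.2.1, h.2.2.1]

end IsPartition

theorem polygonal_length_bounded_general (a b : ℝ) (hb : 0 ≤ b) (ha : a ≤ 1)
    (n : ℕ) (t : ℕ → ℝ) (hpart : IsPartition a b n t)
    (ℓ : ℕ → ℝ) (hℓ : ∀ i, ℓ i = dist (P (t i)) (P (t (i + 1))))
    (ℓ0 : ℝ) (hℓ0 : ℓ0 = dist (P a) (P b))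
    (h0 : ℝ) (hh0 : h0 = Real.sqrt (1 - (ℓ0 / 2) ^ 2)) :
    ∑ i ∈ Finset.range n, ℓ i ≤ ℓ0 / h0 ^ 2 := by
  have hab : b ≤ a := hpart.lt.le
  set x := (arcsin a - arcsin b) / 2 with hx_def
  have hx₀ : 0 ≤ x := by linarith [monotone_arcsin hab]
  have hx : x < π / 2 := by linarith [arcsin_le_pi_div_two a, arcsin_nonneg.2 hb, pi_pos]
  have hℓ0x : ℓ0 = 2 * sin x := by
    rw [hℓ0, dist_P_eq ⟨by linarith, ha⟩ ⟨by linarith, hab.trans ha⟩,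
      abs_of_nonneg (sin_nonneg_of_nonneg_of_le_pi hx₀ (by linarith))]
  have hh0x : h0 ^ 2 = cos x ^ 2 := by
    rw [hh0, hℓ0x, sq_sqrt] <;> nlinarith [sin_sq_add_cos_sq x]
  calc ∑ i ∈ Finset.range n, ℓ i ≤ arcsin a - arcsin b := by
        simpa only [hℓ] using hpart.sum_dist_P_le (by linarith) ha
    _ = 2 * x := by ring
    _ ≤ 2 * (sin x / cos x ^ 2) := by gcongr; exact le_sin_div_cos_sq hx₀ hx
    _ = ℓ0 / h0 ^ 2 := by rw [hℓ0x, hh0x]; ring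

/-- The polygonal length of any partition of the arc from `P a` to `P b` is bounded above
by `ℓ⁰ / (h⁰)²` where `ℓ⁰ = dist (P a) (P b)` and `h⁰ = √(1 - (ℓ⁰/2)²)`. -/
theorem polygonal_length_bounded (a b : ℝ) (hb : 0 ≤ b) (hba : b < a) (ha : a ≤ 1)
    (n : ℕ) (t : ℕ → ℝ) (hpart : IsPartition a b n t)
    (ℓ : ℕ → ℝ) (hℓ : ∀ i, ℓ i = dist (P (t i)) (P (t (i + 1))))
    (ℓ0 : ℝ) (hℓ0 : ℓ0 = dist (P a) (P b))
    (h0 : ℝ) (hh0 : h0 = Real.sqrt (1 - (ℓ0 / 2) ^ 2)) :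
    ∑ i ∈ Finset.range n, ℓ i ≤ ℓ0 / h0 ^ 2 :=
  polygonal_length_bounded_general a b hb ha n t hpart ℓ hℓ ℓ0 hℓ0 h0 hh0
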